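/- arXiv:1907.02810 — 3 statements merged into one kernel-verified Lean document; each statement's English description precedes it below -/
import Mathlib

section
/- Let L, B > 0, Ω = (0,L)×(−B,B), and let u : ℝ² → ℝ be a smooth function with compact support contained in Ω. Then for every natural number p ≥ 1, (∫_Ω |u|^{2p} dx dy)^{1/(2p)} ≤ C_{2p} · (∫_Ω |∇u|² dx dy)^{(p−1)/(2p)} · (∫_Ω u² dx dy)^{1/(2p)}, where C_{2p} = ( p! / (√2)^{p−1} )^{1/p}. -/
open MeasureTheory

/-- The open rectangle `Ω = (0,L) × (-B,B)`. -/
def omega3 (L B : ℝ) : Set (ℝ × ℝ) := Set.Ioo 0 L ×ˢ Set.Ioo (-B) B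

/-- Squared length of the gradient of `u` at `z`: `|∇u|² = (∂_x u)² + (∂_y u)²`. -/
noncomputable def gradSq3 (u : ℝ × ℝ → ℝ) (z : ℝ × ℝ) : ℝ :=
  (fderiv ℝ u z (1, 0)) ^ 2 + (fderiv ℝ u z (0, 1)) ^ 2

namespace GNaux

variable {u v f g : ℝ × ℝ → ℝ}

/-- x-slice derivative. -/
lemma sliceX (hu : ContDiff ℝ (⊤ : ℕ∞) u) (x y : ℝ) :
    HasDerivAt (fun t => u (t, y)) (fderiv ℝ u (x, y) (1, 0)) x := by
  have hline : HasDerivAt (fun t : ℝ => (t, y)) ((1 : ℝ), (0 : ℝ)) x :=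
    (hasDerivAt_id x).prodMk (hasDerivAt_const x y)
  exact (hu.differentiable (by simp) (x, y)).hasFDerivAt.comp_hasDerivAt x hline

lemma sliceY (hu : ContDiff ℝ (⊤ : ℕ∞) u) (x y : ℝ) :
    HasDerivAt (fun s => u (x, s)) (fderiv ℝ u (x, y) (0, 1)) y := by
  have hline : HasDerivAt (fun s : ℝ => (x, s)) ((0 : ℝ), (1 : ℝ)) y :=
    (hasDerivAt_const y x).prodMk (hasDerivAt_id y)
  exact (hu.differentiable (by simp) (x, y)).hasFDerivAt.comp_hasDerivAt y hline

lemma sliceCS_X (hcs : HasCompactSupport f) (y : ℝ) :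
    HasCompactSupport (fun t => f (t, y)) := by
  apply HasCompactSupport.intro (hcs.image continuous_fst)
  intro t ht
  by_contra h
  exact ht ⟨(t, y), subset_tsupport f h, rfl⟩

lemma sliceCS_Y (hcs : HasCompactSupport f) (x : ℝ) :
    HasCompactSupport (fun s => f (x, s)) := by
  apply HasCompactSupport.intro (hcs.image continuous_snd)
  intro s hs
  by_contra h
  exact hs ⟨(x, s), subset_tsupport f h, rfl⟩

lemma contD (hu : ContDiff ℝ (⊤ : ℕ∞) u) (w : ℝ × ℝ) :
    Continuous fun z => fderiv ℝ u z w :=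
  (hu.continuous_fderiv (by simp)).clm_apply continuous_const

lemma csD (hcs : HasCompactSupport u) (w : ℝ × ℝ) :
    HasCompactSupport fun z => fderiv ℝ u z w := by
  exact hcs.fderiv_apply ℝ w

lemma integ (hf : Continuous f) (h : HasCompactSupport f) : Integrable f :=
  hf.integrable_of_hasCompactSupport h

/-- pointwise 1-D bound: `|v (x,y)| ≤ ∫ |∂ₓ v (t,y)| dt`. -/
lemma ptBoundX (hv : ContDiff ℝ (⊤ : ℕ∞) v) (hcs : HasCompactSupport v) (x y : ℝ) :
    |v (x, y)| ≤ ∫ t, |fderiv ℝ v (t, y) (1, 0)| := by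
  set g : ℝ → ℝ := fun t => v (t, y) with hg
  have hg1 : ContDiff ℝ 1 g :=
    (hv.of_le (by simp)).comp (contDiff_id.prodMk contDiff_const)
  have hgcs : HasCompactSupport g := sliceCS_X hcs y
  have hderiv : ∀ t, deriv g t = fderiv ℝ v (t, y) (1, 0) := fun t =>
    (sliceX hv t y).deriv
  have hint : Integrable fun t => deriv g t := by
    have : Continuous fun t => fderiv ℝ v (t, y) (1, 0) :=
      (contD hv (1, 0)).comp (continuous_id.prodMk continuous_const)
    exact (this.integrable_of_hasCompactSupport (sliceCS_X (csD hcs (1, 0)) y)).congr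
      (Filter.Eventually.of_forall fun t => (hderiv t).symm)
  have heq : g x = ∫ t in Set.Iic x, deriv g t :=
    (HasCompactSupport.integral_Iic_deriv_eq hg1 hgcs x).symm
  calc |v (x, y)| = |∫ t in Set.Iic x, deriv g t| := by rw [← heq]
    _ ≤ ∫ t in Set.Iic x, |deriv g t| := by
        simpa [Real.norm_eq_abs] using
          norm_integral_le_integral_norm (μ := volume.restrict (Set.Iic x)) (deriv g)
    _ ≤ ∫ t, |deriv g t| :=
        setIntegral_le_integral hint.abs (Filter.Eventually.of_forall fun t => abs_nonneg _)
    _ = ∫ t, |fderiv ℝ v (t, y) (1, 0)| := by simp [hderiv]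

lemma ptBoundY (hv : ContDiff ℝ (⊤ : ℕ∞) v) (hcs : HasCompactSupport v) (x y : ℝ) :
    |v (x, y)| ≤ ∫ s, |fderiv ℝ v (x, s) (0, 1)| := by
  set g : ℝ → ℝ := fun s => v (x, s) with hg
  have hg1 : ContDiff ℝ 1 g :=
    (hv.of_le (by simp)).comp (contDiff_const.prodMk contDiff_id)
  have hgcs : HasCompactSupport g := sliceCS_Y hcs x
  have hderiv : ∀ s, deriv g s = fderiv ℝ v (x, s) (0, 1) := fun s =>
    (sliceY hv x s).deriv
  have hint : Integrable fun s => deriv g s := by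
    have : Continuous fun s => fderiv ℝ v (x, s) (0, 1) :=
      (contD hv (0, 1)).comp (continuous_const.prodMk continuous_id)
    exact (this.integrable_of_hasCompactSupport (sliceCS_Y (csD hcs (0, 1)) x)).congr
      (Filter.Eventually.of_forall fun s => (hderiv s).symm)
  have heq : g y = ∫ s in Set.Iic y, deriv g s :=
    (HasCompactSupport.integral_Iic_deriv_eq hg1 hgcs y).symm
  calc |v (x, y)| = |∫ s in Set.Iic y, deriv g s| := by rw [← heq]
    _ ≤ ∫ s in Set.Iic y, |deriv g s| := by
        simpa [Real.norm_eq_abs] using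
          norm_integral_le_integral_norm (μ := volume.restrict (Set.Iic y)) (deriv g)
    _ ≤ ∫ s, |deriv g s| :=
        setIntegral_le_integral hint.abs (Filter.Eventually.of_forall fun s => abs_nonneg _)
    _ = ∫ s, |fderiv ℝ v (x, s) (0, 1)| := by simp [hderiv]

/-- Key 2-D inequality: `∫ v² ≤ (∫ |∂ₓ v|) (∫ |∂_y v|)`. -/
lemma key (hv : ContDiff ℝ (⊤ : ℕ∞) v) (hcs : HasCompactSupport v) :
    ∫ z, v z ^ 2 ≤ (∫ z, |fderiv ℝ v z (1, 0)|) * ∫ z, |fderiv ℝ v z (0, 1)| := by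
  set vx : ℝ × ℝ → ℝ := fun z => fderiv ℝ v z (1, 0) with hvx
  set vy : ℝ × ℝ → ℝ := fun z => fderiv ℝ v z (0, 1) with hvy
  have hvxI : Integrable (fun z => |vx z|) := (integ (contD hv _) (csD hcs _)).abs
  have hvyI : Integrable (fun z => |vy z|) := (integ (contD hv _) (csD hcs _)).abs
  have hvxIp : Integrable (fun z => |vx z|) (volume.prod volume) := by
    rwa [← Measure.volume_eq_prod]
  have hvyIp : Integrable (fun z => |vy z|) (volume.prod volume) := by
    rwa [← Measure.volume_eq_prod]
  set F : ℝ → ℝ := fun y => ∫ t, |vx (t, y)| with hF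
  set G : ℝ → ℝ := fun x => ∫ s, |vy (x, s)| with hG
  have hFI : Integrable F := hvxIp.integral_prod_right
  have hGI : Integrable G := hvyIp.integral_prod_left
  have hpt : ∀ z : ℝ × ℝ, v z ^ 2 ≤ G z.1 * F z.2 := by
    rintro ⟨x, y⟩
    have h1 := ptBoundX hv hcs x y
    have h2 := ptBoundY hv hcs x y
    calc v (x, y) ^ 2 = |v (x, y)| * |v (x, y)| := by rw [abs_mul_abs_self, sq]
      _ ≤ G x * F y := mul_le_mul h2 h1 (abs_nonneg _) ((abs_nonneg _).trans h2)
  have hprod : Integrable (fun z : ℝ × ℝ => G z.1 * F z.2) := by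
    rw [Measure.volume_eq_prod]; exact hGI.mul_prod hFI
  have h1 : ∫ z, v z ^ 2 ≤ ∫ z : ℝ × ℝ, G z.1 * F z.2 :=
    integral_mono (integ (hv.continuous.pow 2)
      (hcs.comp_left (g := fun t : ℝ => t ^ 2) (by simp))) hprod hpt
  have h2 : ∫ z : ℝ × ℝ, G z.1 * F z.2 = (∫ x, G x) * ∫ y, F y := by
    rw [Measure.volume_eq_prod]; exact integral_prod_mul G F
  have h3 : ∫ y, F y = ∫ z, |vx z| := by
    rw [Measure.volume_eq_prod (α := ℝ) (β := ℝ)]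
    exact (integral_prod_symm _ hvxIp).symm
  have h4 : ∫ x, G x = ∫ z, |vy z| := by
    rw [Measure.volume_eq_prod (α := ℝ) (β := ℝ)]
    exact (integral_prod _ hvyIp).symm
  calc ∫ z, v z ^ 2 ≤ ∫ z : ℝ × ℝ, G z.1 * F z.2 := h1
    _ = (∫ z, |vx z|) * ∫ z, |vy z| := by rw [h2, h3, h4]; ring

/-- Cauchy–Schwarz for continuous compactly supported functions. -/
lemma CS2 (hf : Continuous f) (hfs : HasCompactSupport f)
    (hg : Continuous g) (hgs : HasCompactSupport g) :
    ∫ z, |f z| * |g z| ≤ Real.sqrt (∫ z, f z ^ 2) * Real.sqrt (∫ z, g z ^ 2) := by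
  have hconj : Real.HolderConjugate 2 2 := Real.HolderConjugate.two_two
  have hfm : MemLp (fun z => |f z|) (ENNReal.ofReal 2) :=
    hf.abs.memLp_of_hasCompactSupport (hfs.comp_left (g := abs) abs_zero)
  have hgm : MemLp (fun z => |g z|) (ENNReal.ofReal 2) :=
    hg.abs.memLp_of_hasCompactSupport (hgs.comp_left (g := abs) abs_zero)
  have h := integral_mul_le_Lp_mul_Lq_of_nonneg hconj
    (Filter.Eventually.of_forall fun z => abs_nonneg (f z))
    (Filter.Eventually.of_forall fun z => abs_nonneg (g z)) hfm hgm
  have e1 : ∀ x : ℝ, |x| ^ (2 : ℝ) = x ^ 2 := fun x => by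
    rw [Real.rpow_two, sq_abs]
  simp_rw [e1] at h
  rw [Real.sqrt_eq_rpow, Real.sqrt_eq_rpow]
  exact h

lemma step (hu : ContDiff ℝ (⊤ : ℕ∞) u) (hcs : HasCompactSupport u) {k : ℕ} (hk : 1 ≤ k) :
    ∫ z, u z ^ (2 * (k + 1)) ≤
      ((k : ℝ) + 1) ^ 2 / 2 * (∫ z, gradSq3 u z) * ∫ z, u z ^ (2 * k) := by
  set v : ℝ × ℝ → ℝ := fun z => u z ^ (k + 1) with hv
  have hvc : ContDiff ℝ (⊤ : ℕ∞) v := hu.pow (k + 1)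
  have hvcs : HasCompactSupport v :=
    hcs.comp_left (g := fun t : ℝ => t ^ (k + 1)) (by simp)
  have hvx : ∀ z : ℝ × ℝ,
      fderiv ℝ v z (1, 0) = ((k : ℝ) + 1) * u z ^ k * fderiv ℝ u z (1, 0) := by
    rintro ⟨x, y⟩
    have h1 : HasDerivAt (fun t => v (t, y)) (fderiv ℝ v (x, y) (1, 0)) x := sliceX hvc x y
    have h2 := (sliceX hu x y).pow (k + 1)
    have h := h1.unique h2
    rw [h]
    push_cast
    simp
  have hvy : ∀ z : ℝ × ℝ,
      fderiv ℝ v z (0, 1) = ((k : ℝ) + 1) * u z ^ k * fderiv ℝ u z (0, 1) := by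
    rintro ⟨x, y⟩
    have h1 : HasDerivAt (fun s => v (x, s)) (fderiv ℝ v (x, y) (0, 1)) y := sliceY hvc x y
    have h2 := (sliceY hu x y).pow (k + 1)
    have h := h1.unique h2
    rw [h]
    push_cast
    simp
  have hkey := key hvc hvcs
  set Q := ∫ z, u z ^ (2 * k) with hQ
  set Ex := ∫ z, (fderiv ℝ u z (1, 0)) ^ 2 with hEx
  set Ey := ∫ z, (fderiv ℝ u z (0, 1)) ^ 2 with hEy
  have hQ0 : 0 ≤ Q := integral_nonneg fun z => by
    rw [pow_mul']; exact sq_nonneg _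
  have hEx0 : 0 ≤ Ex := integral_nonneg fun z => sq_nonneg _
  have hEy0 : 0 ≤ Ey := integral_nonneg fun z => sq_nonneg _
  have hQeq : (∫ z, (u z ^ k) ^ 2) = Q := by
    rw [hQ]
    congr 1
    funext z
    rw [← pow_mul']
  have husq : HasCompactSupport (fun z => u z ^ k) :=
    hcs.comp_left (g := fun t : ℝ => t ^ k) (zero_pow (by omega))
  have hXle : (∫ z, |fderiv ℝ v z (1, 0)|) ≤
      ((k : ℝ) + 1) * (Real.sqrt Q * Real.sqrt Ex) := by
    have e : ∀ z : ℝ × ℝ, |fderiv ℝ v z (1, 0)| =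
        ((k : ℝ) + 1) * (|u z ^ k| * |fderiv ℝ u z (1, 0)|) := fun z => by
      rw [hvx z, abs_mul, abs_mul, abs_of_nonneg (by positivity : (0 : ℝ) ≤ (k : ℝ) + 1)]
      ring
    calc (∫ z, |fderiv ℝ v z (1, 0)|)
        = ((k : ℝ) + 1) * ∫ z, |u z ^ k| * |fderiv ℝ u z (1, 0)| := by
          simp_rw [e]; rw [integral_const_mul]
      _ ≤ ((k : ℝ) + 1) * (Real.sqrt (∫ z, (u z ^ k) ^ 2) *
            Real.sqrt (∫ z, (fderiv ℝ u z (1, 0)) ^ 2)) := by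
          refine mul_le_mul_of_nonneg_left ?_ (by positivity)
          exact CS2 (hu.continuous.pow k) husq (contD hu _) (csD hcs _)
      _ = ((k : ℝ) + 1) * (Real.sqrt Q * Real.sqrt Ex) := by rw [hQeq]
  have hYle : (∫ z, |fderiv ℝ v z (0, 1)|) ≤
      ((k : ℝ) + 1) * (Real.sqrt Q * Real.sqrt Ey) := by
    have e : ∀ z : ℝ × ℝ, |fderiv ℝ v z (0, 1)| =
        ((k : ℝ) + 1) * (|u z ^ k| * |fderiv ℝ u z (0, 1)|) := fun z => by
      rw [hvy z, abs_mul, abs_mul, abs_of_nonneg (by positivity : (0 : ℝ) ≤ (k : ℝ) + 1)]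
      ring
    calc (∫ z, |fderiv ℝ v z (0, 1)|)
        = ((k : ℝ) + 1) * ∫ z, |u z ^ k| * |fderiv ℝ u z (0, 1)| := by
          simp_rw [e]; rw [integral_const_mul]
      _ ≤ ((k : ℝ) + 1) * (Real.sqrt (∫ z, (u z ^ k) ^ 2) *
            Real.sqrt (∫ z, (fderiv ℝ u z (0, 1)) ^ 2)) := by
          refine mul_le_mul_of_nonneg_left ?_ (by positivity)
          exact CS2 (hu.continuous.pow k) husq (contD hu _) (csD hcs _)
      _ = ((k : ℝ) + 1) * (Real.sqrt Q * Real.sqrt Ey) := by rw [hQeq]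
  have hE : ∫ z, gradSq3 u z = Ex + Ey := by
    simp only [gradSq3]
    rw [integral_add]
    · exact integ ((contD hu _).pow 2)
        ((csD hcs (1, 0)).comp_left (g := fun t : ℝ => t ^ 2) (by simp))
    · exact integ ((contD hu _).pow 2)
        ((csD hcs (0, 1)).comp_left (g := fun t : ℝ => t ^ 2) (by simp))
  have hs : Real.sqrt Ex * Real.sqrt Ey ≤ (Ex + Ey) / 2 := by
    nlinarith [sq_nonneg (Real.sqrt Ex - Real.sqrt Ey), Real.sq_sqrt hEx0,
      Real.sq_sqrt hEy0, Real.sqrt_nonneg Ex, Real.sqrt_nonneg Ey]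
  have hXY := mul_le_mul hXle hYle (integral_nonneg fun z => abs_nonneg _)
    (by positivity)
  calc ∫ z, u z ^ (2 * (k + 1)) = ∫ z, v z ^ 2 := by
        congr 1; funext z; rw [hv]; rw [← pow_mul']
    _ ≤ (∫ z, |fderiv ℝ v z (1, 0)|) * ∫ z, |fderiv ℝ v z (0, 1)| := hkey
    _ ≤ (((k : ℝ) + 1) * (Real.sqrt Q * Real.sqrt Ex)) *
          (((k : ℝ) + 1) * (Real.sqrt Q * Real.sqrt Ey)) := hXY
    _ = ((k : ℝ) + 1) ^ 2 * (Real.sqrt Q * Real.sqrt Q) *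
          (Real.sqrt Ex * Real.sqrt Ey) := by ring
    _ = ((k : ℝ) + 1) ^ 2 * Q * (Real.sqrt Ex * Real.sqrt Ey) := by
        rw [Real.mul_self_sqrt hQ0]
    _ ≤ ((k : ℝ) + 1) ^ 2 * Q * ((Ex + Ey) / 2) :=
        mul_le_mul_of_nonneg_left hs (by positivity)
    _ = ((k : ℝ) + 1) ^ 2 / 2 * (Ex + Ey) * Q := by ring
    _ = ((k : ℝ) + 1) ^ 2 / 2 * (∫ z, gradSq3 u z) * Q := by rw [hE]

lemma main (hu : ContDiff ℝ (⊤ : ℕ∞) u) (hcs : HasCompactSupport u) :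
    ∀ p : ℕ, 1 ≤ p →
      ∫ z, u z ^ (2 * p) ≤ ((p.factorial : ℝ)) ^ 2 / 2 ^ (p - 1) *
        (∫ z, gradSq3 u z) ^ (p - 1) * ∫ z, u z ^ 2 := by
  have hE0 : 0 ≤ ∫ z, gradSq3 u z :=
    integral_nonneg fun z => add_nonneg (sq_nonneg _) (sq_nonneg _)
  intro p
  induction p with
  | zero => omega
  | succ n ih =>
    intro _
    rcases Nat.eq_zero_or_pos n with hn | hn
    · subst hn
      simp
    · obtain ⟨m, rfl⟩ : ∃ m, n = m + 1 := ⟨n - 1, (Nat.succ_pred_eq_of_pos hn).symm⟩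
      have h1 := step hu hcs (k := m + 1) (by omega)
      have h2 := ih (by omega)
      have h3 : (((m : ℝ) + 1) + 1) ^ 2 / 2 * (∫ z, gradSq3 u z) * ∫ z, u z ^ (2 * (m + 1)) ≤
          (((m : ℝ) + 1) + 1) ^ 2 / 2 * (∫ z, gradSq3 u z) *
            (((m + 1).factorial : ℝ) ^ 2 / 2 ^ (m + 1 - 1) *
              (∫ z, gradSq3 u z) ^ (m + 1 - 1) * ∫ z, u z ^ 2) :=
        mul_le_mul_of_nonneg_left h2 (by positivity)
      refine le_trans ?_ (le_trans h3 (le_of_eq ?_))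
      · convert h1 using 4
        · rfl
        push_cast
        ring
      · simp only [Nat.add_sub_cancel, Nat.factorial_succ]
        push_cast
        ring

end GNaux

/-- **Gagliardo–Nirenberg inequality with explicit constant** (Corollary 2.1):
for smooth `u` compactly supported in `Ω = (0,L) × (-B,B)` and every natural `p ≥ 1`,
`‖u‖_{L^{2p}} ≤ C_{2p} ‖∇u‖_{L²}^{(p-1)/p} ‖u‖_{L²}^{1/p}` where
`C_{2p} = (p! / (√2)^{p-1})^{1/p}`. -/
theorem gagliardo_nirenberg_explicit (L B : ℝ) (hL : 0 < L) (hB : 0 < B)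
    (u : ℝ × ℝ → ℝ) (hu : ContDiff ℝ (⊤ : ℕ∞) u) (hcs : HasCompactSupport u)
    (hsupp : tsupport u ⊆ omega3 L B) (p : ℕ) (hp : 1 ≤ p) :
    (∫ z in omega3 L B, |u z| ^ (2 * p)) ^ ((1 : ℝ) / (2 * (p : ℝ)))
      ≤ ((p.factorial : ℝ) / (Real.sqrt 2) ^ (p - 1)) ^ ((1 : ℝ) / (p : ℝ)) *
        (∫ z in omega3 L B, gradSq3 u z) ^ (((p : ℝ) - 1) / (2 * (p : ℝ))) *
        (∫ z in omega3 L B, (u z) ^ 2) ^ ((1 : ℝ) / (2 * (p : ℝ))) := by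

  have hzero : ∀ z ∉ omega3 L B, u z = 0 := fun z hz =>
    image_eq_zero_of_notMem_tsupport fun h => hz (hsupp h)
  have hfzero : ∀ z ∉ omega3 L B, fderiv ℝ u z = 0 := fun z hz =>
    fderiv_of_notMem_tsupport ℝ fun h => hz (hsupp h)
  have eq1 : (∫ z in omega3 L B, |u z| ^ (2 * p)) = ∫ z, u z ^ (2 * p) := by
    have : ∀ z : ℝ × ℝ, |u z| ^ (2 * p) = u z ^ (2 * p) := fun z => by
      rw [pow_mul, sq_abs, ← pow_mul]
    simp_rw [this]
    exact setIntegral_eq_integral_of_forall_compl_eq_zero fun z hz => by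
      rw [hzero z hz]; exact zero_pow (by omega)
  have eq2 : (∫ z in omega3 L B, gradSq3 u z) = ∫ z, gradSq3 u z :=
    setIntegral_eq_integral_of_forall_compl_eq_zero fun z hz => by
      simp [gradSq3, hfzero z hz]
  have eq3 : (∫ z in omega3 L B, (u z) ^ 2) = ∫ z, u z ^ 2 :=
    setIntegral_eq_integral_of_forall_compl_eq_zero fun z hz => by
      rw [hzero z hz]; simp
  rw [eq1, eq2, eq3]
  set E := ∫ z, gradSq3 u z with hEdef
  set M := ∫ z, u z ^ 2 with hMdef
  have hE0 : 0 ≤ E :=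
    integral_nonneg fun z => add_nonneg (sq_nonneg _) (sq_nonneg _)
  have hM0 : 0 ≤ M := integral_nonneg fun z => sq_nonneg _
  have hI0 : 0 ≤ ∫ z, u z ^ (2 * p) := integral_nonneg fun z => by
    rw [pow_mul]; exact pow_nonneg (sq_nonneg _) p
  set C : ℝ := (p.factorial : ℝ) / (Real.sqrt 2) ^ (p - 1) with hCdef
  have hC0 : 0 < C := by
    apply div_pos (by exact_mod_cast p.factorial_pos)
    exact pow_pos (Real.sqrt_pos.mpr two_pos) _
  have hC2 : C ^ 2 = (p.factorial : ℝ) ^ 2 / 2 ^ (p - 1) := by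
    rw [hCdef, div_pow, ← pow_mul, mul_comm (p - 1) 2, pow_mul, Real.sq_sqrt (by norm_num : (0:ℝ) ≤ 2)]
  have hmain : (∫ z, u z ^ (2 * p)) ≤ C ^ 2 * E ^ (p - 1) * M := by
    rw [hC2]
    exact GNaux.main hu hcs p hp
  have hp0 : (p : ℝ) ≠ 0 := by positivity
  have h := Real.rpow_le_rpow hI0 hmain (by positivity : (0:ℝ) ≤ 1 / (2 * (p : ℝ)))
  refine h.trans (le_of_eq ?_)
  rw [Real.mul_rpow (by positivity) hM0, Real.mul_rpow (by positivity) (pow_nonneg hE0 _)]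
  congr 1
  congr 1
  · rw [← Real.rpow_natCast C 2, ← Real.rpow_mul hC0.le]
    congr 1
    push_cast
    field_simp
  · rw [← Real.rpow_natCast E (p - 1), ← Real.rpow_mul hE0]
    congr 1
    rw [Nat.cast_sub hp]
    push_cast
    ring
end

section
/- Let L, B > 0 and let u : ℝ² → ℝ be three times continuously differentiable on the closure of Ω = (0,L)×(−B,B), satisfying u(x,−B)=u(x,B)=0 for x∈[0,L], u(0,y)=u(L,y)=0 for y∈[−B,B], and ∂_x u(L,y)=0 for y∈[−B,B]. Then 2∫_Ω (1+x) u (∂_x u + ∂_x³ u + ∂_x∂_y² u) dx dy = ∫_{−B}^{B} (∂_x u(0,y))² dy + ∫_Ω ((∂_x u)² + (∂_y u)²) dx dy + 2∫_Ω (∂_x u)² dx dy − ∫_Ω u² dx dy. -/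
open MeasureTheory

/-- The open rectangle `Ω = (0,L) × (-B,B)`. -/
def omega7 (L B : ℝ) : Set (ℝ × ℝ) := Set.Ioo 0 L ×ˢ Set.Ioo (-B) B

/-- The closed rectangle `[0,L] × [-B,B]`, the closure of `Ω`. -/
def closRect7 (L B : ℝ) : Set (ℝ × ℝ) := Set.Icc 0 L ×ˢ Set.Icc (-B) B

/-- Partial derivative of `u` in `x`, computed within the closed rectangle. -/
noncomputable def pdx7 (L B : ℝ) (u : ℝ × ℝ → ℝ) (z : ℝ × ℝ) : ℝ :=
  fderivWithin ℝ u (closRect7 L B) z (1, 0)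

/-- Partial derivative of `u` in `y`, computed within the closed rectangle. -/
noncomputable def pdy7 (L B : ℝ) (u : ℝ × ℝ → ℝ) (z : ℝ × ℝ) : ℝ :=
  fderivWithin ℝ u (closRect7 L B) z (0, 1)

/-- Third partial derivative `u_{xxx}`, computed within the closed rectangle. -/
noncomputable def pdxxx7 (L B : ℝ) (u : ℝ × ℝ → ℝ) (z : ℝ × ℝ) : ℝ :=
  iteratedFDerivWithin ℝ 3 u (closRect7 L B) z ![(1, 0), (1, 0), (1, 0)]

/-- Mixed third partial derivative `u_{xyy}`, computed within the closed rectangle. -/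
noncomputable def pdxyy7 (L B : ℝ) (u : ℝ × ℝ → ℝ) (z : ℝ × ℝ) : ℝ :=
  iteratedFDerivWithin ℝ 3 u (closRect7 L B) z ![(1, 0), (0, 1), (0, 1)]

/-! The identity is the divergence theorem on the closed rectangle for the flux
`F = (1+x)(u² + 2u u_xx - u_x² + 2u u_yy + u_y²) - 2u u_x`, `G = -2u_y (u + (1+x) u_x)`,
whose divergence, once `u_xy = u_yx` is used, is
`2(1+x)u(u_x + u_xxx + u_xyy) + u² - 3u_x² - u_y²`.
Since `u` vanishes on the boundary, so do its tangential derivatives; hence `G = 0` on the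
horizontal sides, `F = 0` on `x = L` (where also `u_x = 0`) and `F = -u_x²` on `x = 0`. -/

open Set Filter Topology

section IteratedFDerivWithin

variable {𝕜 E F : Type*} [NontriviallyNormedField 𝕜] [NormedAddCommGroup E] [NormedSpace 𝕜 E]
  [NormedAddCommGroup F] [NormedSpace 𝕜 F] {f : E → F} {s : Set E} {N : WithTop ℕ∞} {n : ℕ}
  {z : E}

theorem ContDiffOn.continuousOn_iteratedFDerivWithin_apply (hf : ContDiffOn 𝕜 N f s)
    (hn : n ≤ N) (hs : UniqueDiffOn 𝕜 s) (m : Fin n → E) :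
    ContinuousOn (fun w => iteratedFDerivWithin 𝕜 n f s w m) s :=
  (continuous_eval_const m).comp_continuousOn (hf.continuousOn_iteratedFDerivWithin hn hs)

theorem ContDiffOn.differentiableAt_iteratedFDerivWithin_apply (hf : ContDiffOn 𝕜 N f s)
    (hn : n < N) (hs : UniqueDiffOn 𝕜 s) (hz : s ∈ 𝓝 z) (m : Fin n → E) :
    DifferentiableAt 𝕜 (fun w => iteratedFDerivWithin 𝕜 n f s w m) z :=
  ((hf.differentiableOn_iteratedFDerivWithin hn hs z (mem_of_mem_nhds hz)).differentiableAt
    hz).continuousMultilinear_apply_const m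

theorem ContDiffOn.fderiv_iteratedFDerivWithin_apply (hf : ContDiffOn 𝕜 N f s)
    (hn : n < N) (hs : UniqueDiffOn 𝕜 s) (hz : s ∈ 𝓝 z) (m : Fin n → E) (v : E) :
    fderiv 𝕜 (fun w => iteratedFDerivWithin 𝕜 n f s w m) z v
      = iteratedFDerivWithin 𝕜 (n + 1) f s z (Fin.cons v m) := by
  have hd : DifferentiableAt 𝕜 (iteratedFDerivWithin 𝕜 n f s) z :=
    (hf.differentiableOn_iteratedFDerivWithin hn hs z (mem_of_mem_nhds hz)).differentiableAt hz
  rw [fderiv_continuousMultilinear_apply_const_apply hd, iteratedFDerivWithin_succ_apply_left,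
    fderivWithin_of_mem_nhds hz, Fin.cons_zero, Fin.tail_cons]

theorem ContDiffOn.continuousOn_fderivWithin_apply_const (hf : ContDiffOn 𝕜 N f s) (hN : 1 ≤ N)
    (hs : UniqueDiffOn 𝕜 s) (v : E) : ContinuousOn (fun w => fderivWithin 𝕜 f s w v) s :=
  (hf.continuousOn_fderivWithin hs hN).clm_apply continuousOn_const

theorem fderivWithin_apply_eventuallyEq_iteratedFDerivWithin (hs : UniqueDiffOn 𝕜 s)
    (hz : s ∈ 𝓝 z) (v : E) :
    (fun w => fderivWithin 𝕜 f s w v) =ᶠ[𝓝 z] fun w => iteratedFDerivWithin 𝕜 1 f s w ![v] := by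
  filter_upwards [hz] with w hw using (iteratedFDerivWithin_one_apply (hs w hw) ![v]).symm

theorem ContDiffOn.differentiableAt_fderivWithin_apply (hf : ContDiffOn 𝕜 N f s) (hN : 1 < N)
    (hs : UniqueDiffOn 𝕜 s) (hz : s ∈ 𝓝 z) (v : E) :
    DifferentiableAt 𝕜 (fun w => fderivWithin 𝕜 f s w v) z :=
  (hf.differentiableAt_iteratedFDerivWithin_apply (by exact_mod_cast hN) hs hz
    ![v]).congr_of_eventuallyEq (fderivWithin_apply_eventuallyEq_iteratedFDerivWithin hs hz v)

theorem ContDiffOn.fderiv_fderivWithin_apply (hf : ContDiffOn 𝕜 N f s) (hN : 1 < N)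
    (hs : UniqueDiffOn 𝕜 s) (hz : s ∈ 𝓝 z) (v w : E) :
    fderiv 𝕜 (fun w => fderivWithin 𝕜 f s w v) z w = iteratedFDerivWithin 𝕜 2 f s z ![w, v] := by
  rw [(fderivWithin_apply_eventuallyEq_iteratedFDerivWithin hs hz v).fderiv_eq]
  exact hf.fderiv_iteratedFDerivWithin_apply (by exact_mod_cast hN) hs hz ![v] w

end IteratedFDerivWithin

theorem ContDiffWithinAt.iteratedFDerivWithin_two_comm {E F : Type*} [NormedAddCommGroup E]
    [NormedSpace ℝ E] [NormedAddCommGroup F] [NormedSpace ℝ F] {f : E → F} {s : Set E}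
    {N : WithTop ℕ∞} {x : E} (hf : ContDiffWithinAt ℝ N f s x) (hN : 2 ≤ N)
    (hs : UniqueDiffOn ℝ s) (hx : x ∈ closure (interior s)) (h'x : x ∈ s) (v w : E) :
    iteratedFDerivWithin ℝ 2 f s x ![v, w] = iteratedFDerivWithin ℝ 2 f s x ![w, v] := by
  rw [iteratedFDerivWithin_two_apply' f hs h'x, iteratedFDerivWithin_two_apply' f hs h'x]
  exact hf.isSymmSndFDerivWithinAt (by simpa [minSmoothness_of_isRCLikeNormedField] using hN)
    hs hx h'x v w

theorem fderivWithin_apply_eq_zero_of_comp_eqOn_zero {E F : Type*} [NormedAddCommGroup E]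
    [NormedSpace ℝ E] [NormedAddCommGroup F] [NormedSpace ℝ F] {f : E → F} {s : Set E}
    {γ : ℝ → E} {v : E} {I : Set ℝ} {t : ℝ} (hf : DifferentiableWithinAt ℝ f s (γ t))
    (hγ : HasDerivWithinAt γ v I t) (hγI : MapsTo γ I s) (hfγ : EqOn (f ∘ γ) 0 I)
    (hI : UniqueDiffWithinAt ℝ I t) (ht : t ∈ I) :
    fderivWithin ℝ f s (γ t) v = 0 := by
  have h₁ : HasDerivWithinAt (f ∘ γ) (fderivWithin ℝ f s (γ t) v) I t :=
    hf.hasFDerivWithinAt.comp_hasDerivWithinAt t hγ hγI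
  have h₀ : HasDerivWithinAt (f ∘ γ) 0 I t :=
    (hasDerivWithinAt_const t I 0).congr hfγ (hfγ ht)
  exact hI.eq_deriv I h₁ h₀

-- `p, q, r, s` play the roles of `u_x, u_y, u_xx, u_yy`.
def multiplierFluxX (u p q r s : ℝ × ℝ → ℝ) (z : ℝ × ℝ) : ℝ :=
  (1 + z.1) * (u z ^ 2 + 2 * u z * r z - p z ^ 2 + 2 * u z * s z + q z ^ 2) - 2 * u z * p z

def multiplierFluxY (u p q : ℝ × ℝ → ℝ) (z : ℝ × ℝ) : ℝ :=
  -2 * q z * (u z + (1 + z.1) * p z)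

section MultiplierFlux

variable {u p q r s : ℝ × ℝ → ℝ} {z : ℝ × ℝ}

theorem differentiableAt_multiplierFluxX (hu : DifferentiableAt ℝ u z)
    (hp : DifferentiableAt ℝ p z) (hq : DifferentiableAt ℝ q z) (hr : DifferentiableAt ℝ r z)
    (hs : DifferentiableAt ℝ s z) : DifferentiableAt ℝ (multiplierFluxX u p q r s) z := by
  unfold multiplierFluxX
  fun_prop

theorem differentiableAt_multiplierFluxY (hu : DifferentiableAt ℝ u z)
    (hp : DifferentiableAt ℝ p z) (hq : DifferentiableAt ℝ q z) :
    DifferentiableAt ℝ (multiplierFluxY u p q) z := by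
  unfold multiplierFluxY
  fun_prop

theorem fderiv_multiplierFluxX_add_fderiv_multiplierFluxY (hu : DifferentiableAt ℝ u z)
    (hp : DifferentiableAt ℝ p z) (hq : DifferentiableAt ℝ q z) (hr : DifferentiableAt ℝ r z)
    (hs : DifferentiableAt ℝ s z) (hux : fderiv ℝ u z (1, 0) = p z)
    (huy : fderiv ℝ u z (0, 1) = q z) (hpx : fderiv ℝ p z (1, 0) = r z)
    (hpy : fderiv ℝ p z (0, 1) = fderiv ℝ q z (1, 0)) (hqy : fderiv ℝ q z (0, 1) = s z) :
    fderiv ℝ (multiplierFluxX u p q r s) z (1, 0) + fderiv ℝ (multiplierFluxY u p q) z (0, 1)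
      = 2 * ((1 + z.1) * u z * (p z + fderiv ℝ r z (1, 0) + fderiv ℝ s z (1, 0)))
        + u z ^ 2 - 3 * p z ^ 2 - q z ^ 2 := by
  have hw : HasFDerivAt (fun w : ℝ × ℝ => 1 + w.1) (ContinuousLinearMap.fst ℝ ℝ ℝ) z :=
    hasFDerivAt_fst.const_add 1
  have hu' := hu.hasFDerivAt
  have hp' := hp.hasFDerivAt
  have hq' := hq.hasFDerivAt
  have hX : HasFDerivAt (multiplierFluxX u p q r s) _ z :=
    (hw.mul (((((hu'.pow 2).add ((hu'.const_mul 2).mul hr.hasFDerivAt)).sub (hp'.pow 2)).add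
      ((hu'.const_mul 2).mul hs.hasFDerivAt)).add (hq'.pow 2))).sub ((hu'.const_mul 2).mul hp')
  have hY : HasFDerivAt (multiplierFluxY u p q) _ z :=
    (hq'.const_mul (-2)).mul (hu'.add (hw.mul hp'))
  rw [hX.fderiv, hY.fderiv]
  simp only [add_apply, sub_apply, smul_apply, ContinuousLinearMap.coe_fst', smul_eq_mul,
    nsmul_eq_mul, Pi.add_apply, Pi.sub_apply, Pi.mul_apply, hux, huy, hpx, hpy, hqy]
  ring

end MultiplierFlux

section Rectangle

variable {L B : ℝ}

theorem interior_closRect7 (L B : ℝ) : interior (closRect7 L B) = omega7 L B := by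
  rw [closRect7, omega7, interior_prod_eq, interior_Icc, interior_Icc]

theorem closRect7_mem_nhds {z : ℝ × ℝ} (hz : z ∈ omega7 L B) : closRect7 L B ∈ 𝓝 z := by
  rw [← interior_closRect7] at hz
  exact mem_interior_iff_mem_nhds.1 hz

theorem omega7_subset_closRect7 (L B : ℝ) : omega7 L B ⊆ closRect7 L B :=
  prod_mono Ioo_subset_Icc_self Ioo_subset_Icc_self

theorem closRect7_eq_Icc (L B : ℝ) : closRect7 L B = Icc (0, -B) (L, B) :=
  Icc_prod_Icc _ _ _ _

theorem omega7_ae_eq_closRect7 (L B : ℝ) : omega7 L B =ᵐ[volume] closRect7 L B := by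
  rw [Measure.volume_eq_prod]
  exact Measure.set_prod_ae_eq Ioo_ae_eq_Icc Ioo_ae_eq_Icc

theorem uniqueDiffOn_closRect7 (hL : 0 < L) (hB : 0 < B) : UniqueDiffOn ℝ (closRect7 L B) := by
  refine uniqueDiffOn_convex ((convex_Icc _ _).prod (convex_Icc _ _)) ?_
  rw [interior_closRect7]
  exact ⟨(L / 2, 0), ⟨by linarith, by linarith⟩, ⟨by linarith, by linarith⟩⟩

theorem ContinuousOn.integrableOn_omega7 {E : Type*} [NormedAddCommGroup E] {f : ℝ × ℝ → E} (hf : ContinuousOn f (closRect7 L B)) :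
    IntegrableOn f (omega7 L B) :=
  (hf.integrableOn_compact (isCompact_Icc.prod isCompact_Icc)).mono_set
    (omega7_subset_closRect7 L B)

theorem integral_omega7_eq_boundary {E : Type*} [NormedAddCommGroup E] [NormedSpace ℝ E]
    [CompleteSpace E] {f g φ : ℝ × ℝ → E} (hL : 0 ≤ L) (hB : 0 ≤ B)
    (hf : ContinuousOn f (closRect7 L B)) (hg : ContinuousOn g (closRect7 L B))
    (hfd : ∀ z ∈ omega7 L B, DifferentiableAt ℝ f z)
    (hgd : ∀ z ∈ omega7 L B, DifferentiableAt ℝ g z)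
    (hdiv : ∀ z ∈ omega7 L B, fderiv ℝ f z (1, 0) + fderiv ℝ g z (0, 1) = φ z)
    (hφ : IntegrableOn φ (omega7 L B)) :
    ∫ z in omega7 L B, φ z
      = (∫ x in (0)..L, g (x, B)) - (∫ x in (0)..L, g (x, -B))
        + (∫ y in (-B)..B, f (L, y)) - ∫ y in (-B)..B, f (0, y) := by
  have hmeas : MeasurableSet (omega7 L B) := measurableSet_Ioo.prod measurableSet_Ioo
  have hφ_div : IntegrableOn (fun z => fderiv ℝ f z (1, 0) + fderiv ℝ g z (0, 1)) (omega7 L B) :=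
    hφ.congr_fun (fun z hz => (hdiv z hz).symm) hmeas
  rw [setIntegral_congr_fun hmeas fun z hz => (hdiv z hz).symm,
    setIntegral_congr_set (omega7_ae_eq_closRect7 L B)]
  rw [closRect7_eq_Icc] at hf hg ⊢
  refine integral_divergence_prod_Icc_of_hasFDerivAt_of_le f g _ _ (0, -B) (L, B)
    ⟨hL, by linarith⟩ hf hg (fun z hz => (hfd z hz).hasFDerivAt)
    (fun z hz => (hgd z hz).hasFDerivAt) ?_
  rw [← closRect7_eq_Icc]
  exact hφ_div.congr_set_ae (omega7_ae_eq_closRect7 L B).symm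

end Rectangle

noncomputable def pdxx7 (L B : ℝ) (u : ℝ × ℝ → ℝ) (z : ℝ × ℝ) : ℝ :=
  iteratedFDerivWithin ℝ 2 u (closRect7 L B) z ![(1, 0), (1, 0)]

noncomputable def pdyy7 (L B : ℝ) (u : ℝ × ℝ → ℝ) (z : ℝ × ℝ) : ℝ :=
  iteratedFDerivWithin ℝ 2 u (closRect7 L B) z ![(0, 1), (0, 1)]

section Partials

variable {L B : ℝ} {u : ℝ × ℝ → ℝ}

theorem differentiableAt_pdx7 (hs : UniqueDiffOn ℝ (closRect7 L B))
    (hu : ContDiffOn ℝ 3 u (closRect7 L B)) {z : ℝ × ℝ} (hz : z ∈ omega7 L B) :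
    DifferentiableAt ℝ (pdx7 L B u) z :=
  hu.differentiableAt_fderivWithin_apply (by norm_num) hs (closRect7_mem_nhds hz) _

theorem differentiableAt_pdy7 (hs : UniqueDiffOn ℝ (closRect7 L B))
    (hu : ContDiffOn ℝ 3 u (closRect7 L B)) {z : ℝ × ℝ} (hz : z ∈ omega7 L B) :
    DifferentiableAt ℝ (pdy7 L B u) z :=
  hu.differentiableAt_fderivWithin_apply (by norm_num) hs (closRect7_mem_nhds hz) _

theorem differentiableAt_pdxx7 (hs : UniqueDiffOn ℝ (closRect7 L B))
    (hu : ContDiffOn ℝ 3 u (closRect7 L B)) {z : ℝ × ℝ} (hz : z ∈ omega7 L B) :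
    DifferentiableAt ℝ (pdxx7 L B u) z :=
  hu.differentiableAt_iteratedFDerivWithin_apply (by norm_num) hs (closRect7_mem_nhds hz) _

theorem differentiableAt_pdyy7 (hs : UniqueDiffOn ℝ (closRect7 L B))
    (hu : ContDiffOn ℝ 3 u (closRect7 L B)) {z : ℝ × ℝ} (hz : z ∈ omega7 L B) :
    DifferentiableAt ℝ (pdyy7 L B u) z :=
  hu.differentiableAt_iteratedFDerivWithin_apply (by norm_num) hs (closRect7_mem_nhds hz) _

theorem multiplierFlux7_div_eq (hs : UniqueDiffOn ℝ (closRect7 L B))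
    (hu : ContDiffOn ℝ 3 u (closRect7 L B)) {z : ℝ × ℝ} (hz : z ∈ omega7 L B) :
    fderiv ℝ (multiplierFluxX u (pdx7 L B u) (pdy7 L B u) (pdxx7 L B u) (pdyy7 L B u)) z (1, 0)
      + fderiv ℝ (multiplierFluxY u (pdx7 L B u) (pdy7 L B u)) z (0, 1)
      = 2 * ((1 + z.1) * u z * (pdx7 L B u z + pdxxx7 L B u z + pdxyy7 L B u z))
        + u z ^ 2 - 3 * pdx7 L B u z ^ 2 - pdy7 L B u z ^ 2 := by
  have hsz := closRect7_mem_nhds hz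
  have hpx (v : ℝ × ℝ) :
      fderiv ℝ (pdx7 L B u) z v = iteratedFDerivWithin ℝ 2 u (closRect7 L B) z ![v, (1, 0)] :=
    hu.fderiv_fderivWithin_apply (by norm_num) hs hsz _ v
  have hpy (v : ℝ × ℝ) :
      fderiv ℝ (pdy7 L B u) z v = iteratedFDerivWithin ℝ 2 u (closRect7 L B) z ![v, (0, 1)] :=
    hu.fderiv_fderivWithin_apply (by norm_num) hs hsz _ v
  have hsymm : iteratedFDerivWithin ℝ 2 u (closRect7 L B) z ![(0, 1), (1, 0)]
      = iteratedFDerivWithin ℝ 2 u (closRect7 L B) z ![(1, 0), (0, 1)] :=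
    (hu.contDiffWithinAt (mem_of_mem_nhds hsz)).iteratedFDerivWithin_two_comm (by norm_num) hs
      (subset_closure (by rwa [interior_closRect7])) (mem_of_mem_nhds hsz) _ _
  have hxxx : fderiv ℝ (pdxx7 L B u) z (1, 0) = pdxxx7 L B u z :=
    hu.fderiv_iteratedFDerivWithin_apply (by norm_num) hs hsz _ _
  have hxyy : fderiv ℝ (pdyy7 L B u) z (1, 0) = pdxyy7 L B u z :=
    hu.fderiv_iteratedFDerivWithin_apply (by norm_num) hs hsz _ _
  have hux (v : ℝ × ℝ) : fderiv ℝ u z v = fderivWithin ℝ u (closRect7 L B) z v := by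
    rw [fderivWithin_of_mem_nhds hsz]
  rw [fderiv_multiplierFluxX_add_fderiv_multiplierFluxY
    ((hu.contDiffAt hsz).differentiableAt (by norm_num)) (differentiableAt_pdx7 hs hu hz)
    (differentiableAt_pdy7 hs hu hz) (differentiableAt_pdxx7 hs hu hz)
    (differentiableAt_pdyy7 hs hu hz) (hux _) (hux _) (hpx _) (by rw [hpx, hpy, hsymm]) (hpy _),
    hxxx, hxyy]

end Partials

section Boundary

variable {L B : ℝ} {u : ℝ × ℝ → ℝ}

theorem pdx7_eq_zero_of_horizontal (hL : 0 < L) (hu : DifferentiableOn ℝ u (closRect7 L B))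
    {c : ℝ} (hc : c ∈ Icc (-B) B) (h : ∀ x ∈ Icc 0 L, u (x, c) = 0) {x : ℝ}
    (hx : x ∈ Icc 0 L) : pdx7 L B u (x, c) = 0 :=
  fderivWithin_apply_eq_zero_of_comp_eqOn_zero (γ := fun t => (t, c)) (hu _ ⟨hx, hc⟩)
    ((hasDerivAt_id x).prodMk (hasDerivAt_const x c)).hasDerivWithinAt (fun _ ht => ⟨ht, hc⟩)
    h (uniqueDiffOn_Icc hL x hx) hx

theorem pdy7_eq_zero_of_vertical (hB : 0 < B) (hu : DifferentiableOn ℝ u (closRect7 L B))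
    {c : ℝ} (hc : c ∈ Icc 0 L) (h : ∀ y ∈ Icc (-B) B, u (c, y) = 0) {y : ℝ}
    (hy : y ∈ Icc (-B) B) : pdy7 L B u (c, y) = 0 :=
  fderivWithin_apply_eq_zero_of_comp_eqOn_zero (γ := fun t => (c, t)) (hu _ ⟨hc, hy⟩)
    ((hasDerivAt_const y c).prodMk (hasDerivAt_id y)).hasDerivWithinAt (fun _ ht => ⟨hc, ht⟩)
    h (uniqueDiffOn_Icc (by linarith) y hy) hy

theorem eqOn_multiplierFluxY_horizontal (hL : 0 < L)
    (hu : DifferentiableOn ℝ u (closRect7 L B)) {c : ℝ} (hc : c ∈ Icc (-B) B)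
    (h : ∀ x ∈ Icc 0 L, u (x, c) = 0) :
    EqOn (fun x => multiplierFluxY u (pdx7 L B u) (pdy7 L B u) (x, c)) 0 (Icc 0 L) :=
  fun x hx => by simp [multiplierFluxY, h x hx, pdx7_eq_zero_of_horizontal hL hu hc h hx]

theorem eqOn_multiplierFluxX_vertical (hB : 0 < B) (hu : DifferentiableOn ℝ u (closRect7 L B))
    {r s : ℝ × ℝ → ℝ} {c : ℝ} (hc : c ∈ Icc 0 L) (h : ∀ y ∈ Icc (-B) B, u (c, y) = 0) :
    EqOn (fun y => multiplierFluxX u (pdx7 L B u) (pdy7 L B u) r s (c, y))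
      (fun y => -(1 + c) * pdx7 L B u (c, y) ^ 2) (Icc (-B) B) := fun y hy => by
  simp only [multiplierFluxX, h y hy, pdy7_eq_zero_of_vertical hB hu hc h hy]
  ring

end Boundary

theorem integral_multiplierFlux7_div_eq (L B : ℝ) (hL : 0 < L) (hB : 0 < B) (u : ℝ × ℝ → ℝ)
    (hu : ContDiffOn ℝ 3 u (closRect7 L B))
    (hbdy_y : ∀ x ∈ Icc (0 : ℝ) L, u (x, -B) = 0 ∧ u (x, B) = 0)
    (hbdy_x : ∀ y ∈ Icc (-B) B, u ((0 : ℝ), y) = 0 ∧ u (L, y) = 0)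
    (hbdy_ux : ∀ y ∈ Icc (-B) B, pdx7 L B u (L, y) = 0) :
    ∫ z in omega7 L B, (2 * ((1 + z.1) * u z * (pdx7 L B u z + pdxxx7 L B u z + pdxyy7 L B u z))
        + u z ^ 2 - 3 * pdx7 L B u z ^ 2 - pdy7 L B u z ^ 2)
      = ∫ y in (-B)..B, pdx7 L B u (0, y) ^ 2 := by
  have hs := uniqueDiffOn_closRect7 hL hB
  have hdu : DifferentiableOn ℝ u (closRect7 L B) := hu.differentiableOn (by norm_num)
  have hcu := hu.continuousOn
  have hcx : ContinuousOn (pdx7 L B u) (closRect7 L B) :=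
    hu.continuousOn_fderivWithin_apply_const (by norm_num) hs _
  have hcy : ContinuousOn (pdy7 L B u) (closRect7 L B) :=
    hu.continuousOn_fderivWithin_apply_const (by norm_num) hs _
  have hcxx : ContinuousOn (pdxx7 L B u) (closRect7 L B) :=
    hu.continuousOn_iteratedFDerivWithin_apply (by norm_num) hs _
  have hcyy : ContinuousOn (pdyy7 L B u) (closRect7 L B) :=
    hu.continuousOn_iteratedFDerivWithin_apply (by norm_num) hs _
  have hcxxx : ContinuousOn (pdxxx7 L B u) (closRect7 L B) :=
    hu.continuousOn_iteratedFDerivWithin_apply (by norm_num) hs _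
  have hcxyy : ContinuousOn (pdxyy7 L B u) (closRect7 L B) :=
    hu.continuousOn_iteratedFDerivWithin_apply (by norm_num) hs _
  have hdiff {z : ℝ × ℝ} (hz : z ∈ omega7 L B) : DifferentiableAt ℝ u z :=
    (hu.contDiffAt (closRect7_mem_nhds hz)).differentiableAt (by norm_num)
  have hLB : -B ≤ B := by linarith
  rw [integral_omega7_eq_boundary hL.le hB.le
    (by unfold multiplierFluxX; fun_prop) (by unfold multiplierFluxY; fun_prop)
    (fun z hz => differentiableAt_multiplierFluxX (hdiff hz) (differentiableAt_pdx7 hs hu hz)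
      (differentiableAt_pdy7 hs hu hz) (differentiableAt_pdxx7 hs hu hz)
      (differentiableAt_pdyy7 hs hu hz))
    (fun z hz => differentiableAt_multiplierFluxY (hdiff hz) (differentiableAt_pdx7 hs hu hz)
      (differentiableAt_pdy7 hs hu hz))
    (fun z hz => multiplierFlux7_div_eq hs hu hz)
    (ContinuousOn.integrableOn_omega7 (by fun_prop)),
    intervalIntegral.integral_congr <| (eqOn_multiplierFluxY_horizontal hL hdu ⟨hLB, le_rfl⟩
      fun x hx => (hbdy_y x hx).2).mono (uIcc_of_le hL.le).subset,
    intervalIntegral.integral_congr <| (eqOn_multiplierFluxY_horizontal hL hdu ⟨le_rfl, hLB⟩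
      fun x hx => (hbdy_y x hx).1).mono (uIcc_of_le hL.le).subset,
    intervalIntegral.integral_congr (g := 0) <| ((eqOn_multiplierFluxX_vertical hB hdu
      ⟨hL.le, le_rfl⟩ fun y hy => (hbdy_x y hy).2).trans fun y hy => by simp [hbdy_ux y hy]).mono
      (uIcc_of_le hLB).subset,
    intervalIntegral.integral_congr <| (eqOn_multiplierFluxX_vertical hB hdu ⟨le_rfl, hL.le⟩
      fun y hy => (hbdy_x y hy).1).mono (uIcc_of_le hLB).subset]
  simp

/-- **Integration-by-parts identity for the linear part of the mZK operator with the
multiplier `(1+x)u`** (underlying identity (5.4) of Estimate II): for `u` three times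
continuously differentiable on the closure of `Ω = (0,L) × (-B,B)` with
`u(x,±B) = 0`, `u(0,y) = u(L,y) = 0` and `u_x(L,y) = 0`,
`2∫_Ω (1+x) u (u_x + u_xxx + u_xyy)
   = ∫_{-B}^{B} u_x(0,y)² dy + ∫_Ω (u_x² + u_y²) + 2∫_Ω u_x² − ∫_Ω u²`. -/
theorem linear_part_identity (L B : ℝ) (hL : 0 < L) (hB : 0 < B) (u : ℝ × ℝ → ℝ)
    (hu : ContDiffOn ℝ 3 u (closRect7 L B))
    (hbdy_y : ∀ x ∈ Set.Icc (0 : ℝ) L, u (x, -B) = 0 ∧ u (x, B) = 0)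
    (hbdy_x : ∀ y ∈ Set.Icc (-B) B, u ((0 : ℝ), y) = 0 ∧ u (L, y) = 0)
    (hbdy_ux : ∀ y ∈ Set.Icc (-B) B, pdx7 L B u (L, y) = 0) :
    2 * (∫ z in omega7 L B,
          (1 + z.1) * u z * (pdx7 L B u z + pdxxx7 L B u z + pdxyy7 L B u z))
      = (∫ y in (-B)..B, (pdx7 L B u (0, y)) ^ 2)
        + (∫ z in omega7 L B, ((pdx7 L B u z) ^ 2 + (pdy7 L B u z) ^ 2))
        + 2 * (∫ z in omega7 L B, (pdx7 L B u z) ^ 2)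
        - ∫ z in omega7 L B, (u z) ^ 2 := by
  have hs := uniqueDiffOn_closRect7 hL hB
  have hcu := hu.continuousOn
  have hcx : ContinuousOn (pdx7 L B u) (closRect7 L B) :=
    hu.continuousOn_fderivWithin_apply_const (by norm_num) hs _
  have hcy : ContinuousOn (pdy7 L B u) (closRect7 L B) :=
    hu.continuousOn_fderivWithin_apply_const (by norm_num) hs _
  have hcxxx : ContinuousOn (pdxxx7 L B u) (closRect7 L B) :=
    hu.continuousOn_iteratedFDerivWithin_apply le_rfl hs _
  have hcxyy : ContinuousOn (pdxyy7 L B u) (closRect7 L B) :=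
    hu.continuousOn_iteratedFDerivWithin_apply le_rfl hs _
  have hdiv := integral_multiplierFlux7_div_eq L B hL hB u hu hbdy_y hbdy_x hbdy_ux
  rw [integral_sub, integral_sub, integral_add, integral_const_mul, integral_const_mul] at hdiv
  rw [integral_add]
  · linarith
  all_goals exact ContinuousOn.integrableOn_omega7 (by fun_prop)
end

section
/- Let L, B > 0 and let u : ℝ² → ℝ be three times continuously differentiable on the closure of Ω = (0,L)×(−B,B), satisfying u(x,−B)=u(x,B)=0 for x∈[0,L], u(0,y)=u(L,y)=0 for y∈[−B,B], and ∂_x u(L,y)=0 for y∈[−B,B]. Then 2∫_Ω u (∂_x u + u²∂_x u + ∂_x³ u + ∂_x∂_y² u) dx dy = ∫_{−B}^{B} (∂_x u(0,y))² dy. In particular this quantity is nonnegative. -/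
open MeasureTheory

/-- The open rectangle `Ω = (0,L) × (-B,B)`. -/
def omega9 (L B : ℝ) : Set (ℝ × ℝ) := Set.Ioo 0 L ×ˢ Set.Ioo (-B) B

/-- The closed rectangle `[0,L] × [-B,B]`, the closure of `Ω`. -/
def closRect9 (L B : ℝ) : Set (ℝ × ℝ) := Set.Icc 0 L ×ˢ Set.Icc (-B) B

/-- Partial derivative of `u` in `x`, computed within the closed rectangle. -/
noncomputable def pdx9 (L B : ℝ) (u : ℝ × ℝ → ℝ) (z : ℝ × ℝ) : ℝ :=
  fderivWithin ℝ u (closRect9 L B) z (1, 0)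

/-- Third partial derivative `u_{xxx}`, computed within the closed rectangle. -/
noncomputable def pdxxx9 (L B : ℝ) (u : ℝ × ℝ → ℝ) (z : ℝ × ℝ) : ℝ :=
  iteratedFDerivWithin ℝ 3 u (closRect9 L B) z ![(1, 0), (1, 0), (1, 0)]

/-- Mixed third partial derivative `u_{xyy}`, computed within the closed rectangle. -/
noncomputable def pdxyy9 (L B : ℝ) (u : ℝ × ℝ → ℝ) (z : ℝ × ℝ) : ℝ :=
  iteratedFDerivWithin ℝ 3 u (closRect9 L B) z ![(1, 0), (0, 1), (0, 1)]

/-!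
The integrand is a divergence: with `P = u²/2 + u⁴/4 + u u_xx - u_x²/2 - u_y²/2` and `Q = u u_xy`,
`u (u_x + u² u_x + u_xxx + u_xyy) = ∂ₓP + ∂ᵧQ`, where `∂ᵧ u_xy = u_xyy` by symmetry of second
derivatives. By Green's theorem on the rectangle the integral is the flux of `(P, Q)` through the
boundary. `Q` vanishes on the horizontal sides, where `u` does. On the vertical sides `u = 0`, hence
also `u_y = 0`, so `P = -u_x²/2`; this vanishes at `x = L` and contributes `½ ∫ u_x(0,y)² dy` at
`x = 0`.
-/

open Set

section DirDeriv

variable {𝕜 : Type*} [NontriviallyNormedField 𝕜] {E F : Type*}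
  [NormedAddCommGroup E] [NormedSpace 𝕜 E] [NormedAddCommGroup F] [NormedSpace 𝕜 F]
  {s : Set E} {f : E → F} {z : E}

variable (𝕜) in
noncomputable def dirDerivWithin (s : Set E) (v : E) (f : E → F) : E → F :=
  fun z => fderivWithin 𝕜 f s z v

theorem HasFDerivWithinAt.div_const {c : E → 𝕜} {c' : E →L[𝕜] 𝕜}
    (hc : HasFDerivWithinAt c c' s z) (d : 𝕜) :
    HasFDerivWithinAt (fun y => c y / d) (d⁻¹ • c') s z := by
  simpa only [div_eq_mul_inv] using hc.mul_const d⁻¹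

theorem HasFDerivWithinAt.dirDerivWithin_eq {f' : E →L[𝕜] F} (hf : HasFDerivWithinAt f f' s z)
    (hs : UniqueDiffWithinAt 𝕜 s z) (v : E) : dirDerivWithin 𝕜 s v f z = f' v := by
  rw [dirDerivWithin, hf.fderivWithin hs]

theorem ContDiffOn.dirDerivWithin {m n : WithTop ℕ∞} (hf : ContDiffOn 𝕜 n f s)
    (hs : UniqueDiffOn 𝕜 s) (hmn : m + 1 ≤ n) (v : E) :
    ContDiffOn 𝕜 m (dirDerivWithin 𝕜 s v f) s :=
  (hf.fderivWithin hs hmn).clm_apply contDiffOn_const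

theorem iteratedFDerivWithin_succ_apply_eq_dirDerivWithin {n : ℕ} (hs : UniqueDiffOn 𝕜 s)
    (hf : ContDiffOn 𝕜 (n + 1) f s) (hz : z ∈ s) (m : Fin (n + 1) → E) :
    iteratedFDerivWithin 𝕜 (n + 1) f s z m
      = iteratedFDerivWithin 𝕜 n (dirDerivWithin 𝕜 s (m (Fin.last n)) f) s z (Fin.init m) := by
  rw [iteratedFDerivWithin_succ_apply_right hs hz,
    ← iteratedFDerivWithin_clm_apply_const_apply hs (hf.fderivWithin hs le_rfl) le_rfl hz]
  rfl

theorem iteratedFDerivWithin_three_apply (hs : UniqueDiffOn 𝕜 s) (hf : ContDiffOn 𝕜 3 f s)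
    (hz : z ∈ s) (a b c : E) :
    iteratedFDerivWithin 𝕜 3 f s z ![a, b, c]
      = dirDerivWithin 𝕜 s a (dirDerivWithin 𝕜 s b (dirDerivWithin 𝕜 s c f)) z := by
  have hfc : ContDiffOn 𝕜 (1 + 1) (dirDerivWithin 𝕜 s c f) s :=
    hf.dirDerivWithin hs (by norm_num) c
  rw [iteratedFDerivWithin_succ_apply_eq_dirDerivWithin (n := 2) hs hf hz]
  refine (iteratedFDerivWithin_succ_apply_eq_dirDerivWithin (n := 1) hs hfc hz _).trans ?_
  rw [iteratedFDerivWithin_one_apply (hs z hz)]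
  rfl

theorem dirDerivWithin_comm [IsRCLikeNormedField 𝕜] (hs : UniqueDiffOn 𝕜 s)
    (hf : ContDiffOn 𝕜 2 f s) (hz : z ∈ closure (interior s)) (hzs : z ∈ s) (v w : E) :
    dirDerivWithin 𝕜 s v (dirDerivWithin 𝕜 s w f) z
      = dirDerivWithin 𝕜 s w (dirDerivWithin 𝕜 s v f) z := by
  have hf' : DifferentiableWithinAt 𝕜 (fderivWithin 𝕜 f s) s z :=
    (hf.fderivWithin hs (m := 1) (by norm_num)).differentiableOn one_ne_zero z hzs
  have hsecond : ∀ v w, dirDerivWithin 𝕜 s v (dirDerivWithin 𝕜 s w f) z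
      = fderivWithin 𝕜 (fderivWithin 𝕜 f s) s z v w := fun v w => by
    unfold dirDerivWithin
    rw [fderivWithin_clm_apply (hs z hzs) hf' (differentiableWithinAt_const w)]
    simp
  rw [hsecond, hsecond]
  exact (hf z hzs).isSymmSndFDerivWithinAt (by simp) hs hz hzs v w

end DirDeriv

theorem dirDerivWithin_snd_eq_zero_of_vanishing {F : Type*} [NormedAddCommGroup F]
    [NormedSpace ℝ F] {s : Set (ℝ × ℝ)} {g : ℝ × ℝ → F} {a c d y : ℝ} (hcd : c < d)
    (hseg : ∀ t ∈ Icc c d, (a, t) ∈ s) (hg : DifferentiableWithinAt ℝ g s (a, y))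
    (hzero : ∀ t ∈ Icc c d, g (a, t) = 0) (hy : y ∈ Icc c d) :
    dirDerivWithin ℝ s (0, 1) g (a, y) = 0 := by
  have hline : HasDerivWithinAt (fun t => g (a, t)) (dirDerivWithin ℝ s (0, 1) g (a, y))
      (Icc c d) y :=
    hg.hasFDerivWithinAt.comp_hasDerivWithinAt y
      ((hasDerivAt_const y a).prodMk (hasDerivAt_id y)).hasDerivWithinAt hseg
  have hconst : HasDerivWithinAt (fun t => g (a, t)) 0 (Icc c d) y :=
    (hasDerivWithinAt_const y _ 0).congr hzero (hzero y hy)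
  exact (uniqueDiffOn_Icc hcd y hy).eq_deriv _ hline hconst

theorem uniqueDiffOn_closRect9 {L B : ℝ} (hL : 0 < L) (hB : 0 < B) :
    UniqueDiffOn ℝ (closRect9 L B) :=
  (uniqueDiffOn_Icc hL).prod (uniqueDiffOn_Icc (neg_lt_self hB))

theorem interior_closRect9 (L B : ℝ) : interior (closRect9 L B) = omega9 L B := by
  rw [closRect9, interior_prod_eq, interior_Icc, interior_Icc, omega9]

theorem integral_omega9_eq_boundary {E : Type*} [NormedAddCommGroup E] [NormedSpace ℝ E]
    [CompleteSpace E] {L B : ℝ} (hL : 0 < L) (hB : 0 < B) {F G : ℝ × ℝ → E}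
    (hF : ContDiffOn ℝ 1 F (closRect9 L B)) (hG : ContDiffOn ℝ 1 G (closRect9 L B)) :
    ∫ z in omega9 L B, (dirDerivWithin ℝ (closRect9 L B) (1, 0) F z
        + dirDerivWithin ℝ (closRect9 L B) (0, 1) G z)
      = (((∫ x in (0 : ℝ)..L, G (x, B)) - ∫ x in (0 : ℝ)..L, G (x, -B))
          + ∫ y in (-B)..B, F (L, y)) - ∫ y in (-B)..B, F (0, y) := by
  set S := closRect9 L B
  have hS : UniqueDiffOn ℝ S := uniqueDiffOn_closRect9 hL hB
  have hasFDerivAt_of_mem {H : ℝ × ℝ → E} (hH : ContDiffOn ℝ 1 H S) (z : ℝ × ℝ)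
      (hz : z ∈ omega9 L B) : HasFDerivAt H (fderivWithin ℝ H S z) z :=
    have hzS : S ∈ nhds z := mem_interior_iff_mem_nhds.1 ((interior_closRect9 L B).symm ▸ hz)
    (hH.differentiableOn one_ne_zero z (mem_of_mem_nhds hzS)).hasFDerivWithinAt.hasFDerivAt hzS
  have hdiv_cont : ContinuousOn (fun z => dirDerivWithin ℝ S (1, 0) F z
      + dirDerivWithin ℝ S (0, 1) G z) S :=
    ((hF.continuousOn_fderivWithin hS le_rfl).clm_apply continuousOn_const).add
      ((hG.continuousOn_fderivWithin hS le_rfl).clm_apply continuousOn_const)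
  have hS_eq : S = Icc ((0 : ℝ), -B) (L, B) := by rw [Icc_prod_eq]; rfl
  have hΩ : omega9 L B =ᵐ[volume] S := by
    rw [Measure.volume_eq_prod]
    exact Measure.set_prod_ae_eq Ioo_ae_eq_Icc Ioo_ae_eq_Icc
  have green := integral_divergence_prod_Icc_of_hasFDerivAt_of_le F G (fderivWithin ℝ F S)
    (fderivWithin ℝ G S) ((0 : ℝ), -B) (L, B) ⟨hL.le, neg_le_self hB.le⟩
    (hS_eq ▸ hF.continuousOn) (hS_eq ▸ hG.continuousOn) (hasFDerivAt_of_mem hF)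
    (hasFDerivAt_of_mem hG)
    (hS_eq ▸ hdiv_cont.integrableOn_compact (isCompact_Icc.prod isCompact_Icc))
  rw [← hS_eq] at green
  rw [setIntegral_congr_set hΩ]
  exact green

section Flux

variable {L B : ℝ} {u : ℝ × ℝ → ℝ}

local notation "∂ₓ" => dirDerivWithin ℝ (closRect9 L B) (1, 0)
local notation "∂ᵧ" => dirDerivWithin ℝ (closRect9 L B) (0, 1)

variable (L B) in
noncomputable def fluxX (u : ℝ × ℝ → ℝ) (z : ℝ × ℝ) : ℝ :=
  u z ^ 2 / 2 + u z ^ 4 / 4 + u z * ∂ₓ (∂ₓ u) z - ∂ₓ u z ^ 2 / 2 - ∂ᵧ u z ^ 2 / 2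

variable (L B) in
noncomputable def fluxY (u : ℝ × ℝ → ℝ) (z : ℝ × ℝ) : ℝ :=
  u z * ∂ₓ (∂ᵧ u) z

theorem pdx9_eq_dirDerivWithin : pdx9 L B u = ∂ₓ u := rfl

theorem contDiffOn_fluxX (hL : 0 < L) (hB : 0 < B) (hu : ContDiffOn ℝ 3 u (closRect9 L B)) :
    ContDiffOn ℝ 1 (fluxX L B u) (closRect9 L B) := by
  have hS := uniqueDiffOn_closRect9 hL hB
  have hu1 : ContDiffOn ℝ 1 u (closRect9 L B) := hu.of_le (by norm_num)
  have hux := hu.dirDerivWithin (m := 1) hS (by norm_num) (1, 0)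
  have huy := hu.dirDerivWithin (m := 1) hS (by norm_num) (0, 1)
  have huxx := (hu.dirDerivWithin (m := 2) hS (by norm_num) (1, 0)).dirDerivWithin (m := 1) hS
    (by norm_num) (1, 0)
  exact ((((hu1.pow 2).div_const 2).add ((hu1.pow 4).div_const 4)).add (hu1.mul huxx)).sub
    ((hux.pow 2).div_const 2) |>.sub ((huy.pow 2).div_const 2)

theorem contDiffOn_fluxY (hL : 0 < L) (hB : 0 < B) (hu : ContDiffOn ℝ 3 u (closRect9 L B)) :
    ContDiffOn ℝ 1 (fluxY L B u) (closRect9 L B) := by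
  have hS := uniqueDiffOn_closRect9 hL hB
  have huxy := (hu.dirDerivWithin (m := 2) hS (by norm_num) (0, 1)).dirDerivWithin (m := 1) hS
    (by norm_num) (1, 0)
  exact (hu.of_le (by norm_num)).mul huxy

theorem dirDerivWithin_fluxX (hL : 0 < L) (hB : 0 < B) (hu : ContDiffOn ℝ 3 u (closRect9 L B))
    {z : ℝ × ℝ} (hz : z ∈ closRect9 L B) :
    ∂ₓ (fluxX L B u) z
      = u z * ∂ₓ u z + u z ^ 3 * ∂ₓ u z + u z * ∂ₓ (∂ₓ (∂ₓ u)) z - ∂ᵧ u z * ∂ₓ (∂ᵧ u) z := by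
  have hS := uniqueDiffOn_closRect9 hL hB
  have hasFDeriv {g : ℝ × ℝ → ℝ} (hg : ContDiffOn ℝ 1 g (closRect9 L B)) :=
    (hg.differentiableOn one_ne_zero z hz).hasFDerivWithinAt
  have hu1 : ContDiffOn ℝ 1 u (closRect9 L B) := hu.of_le (by norm_num)
  have hux := hu.dirDerivWithin (m := 2) hS (by norm_num) (1, 0)
  have huy := hu.dirDerivWithin (m := 1) hS (by norm_num) (0, 1)
  have huxx := hux.dirDerivWithin (m := 1) hS (by norm_num) (1, 0)
  have H : HasFDerivWithinAt (fluxX L B u) _ (closRect9 L B) z :=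
    (((((hasFDeriv hu1).pow 2).div_const 2).add (((hasFDeriv hu1).pow 4).div_const 4)).add
      ((hasFDeriv hu1).mul (hasFDeriv huxx))).sub
      (((hasFDeriv (hux.of_le (by norm_num))).pow 2).div_const 2)
    |>.sub (((hasFDeriv huy).pow 2).div_const 2)
  rw [H.dirDerivWithin_eq (hS z hz)]
  simp only [Nat.add_one_sub_one, pow_one, nsmul_eq_mul, Nat.cast_ofNat, dirDerivWithin,
    sub_apply, add_apply, smul_apply, smul_eq_mul]
  ring

theorem dirDerivWithin_fluxY (hL : 0 < L) (hB : 0 < B) (hu : ContDiffOn ℝ 3 u (closRect9 L B))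
    {z : ℝ × ℝ} (hz : z ∈ closRect9 L B) :
    ∂ᵧ (fluxY L B u) z = ∂ᵧ u z * ∂ₓ (∂ᵧ u) z + u z * ∂ᵧ (∂ₓ (∂ᵧ u)) z := by
  have hS := uniqueDiffOn_closRect9 hL hB
  have hasFDeriv {g : ℝ × ℝ → ℝ} (hg : ContDiffOn ℝ 1 g (closRect9 L B)) :=
    (hg.differentiableOn one_ne_zero z hz).hasFDerivWithinAt
  have huxy := (hu.dirDerivWithin (m := 2) hS (by norm_num) (0, 1)).dirDerivWithin (m := 1) hS
    (by norm_num) (1, 0)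
  have H : HasFDerivWithinAt (fluxY L B u) _ (closRect9 L B) z :=
    (hasFDeriv (hu.of_le (by norm_num))).mul (hasFDeriv huxy)
  rw [H.dirDerivWithin_eq (hS z hz)]
  simp only [dirDerivWithin, add_apply, smul_apply, smul_eq_mul]
  ring

theorem integrand_eq_dirDerivWithin_flux (hL : 0 < L) (hB : 0 < B)
    (hu : ContDiffOn ℝ 3 u (closRect9 L B)) {z : ℝ × ℝ} (hz : z ∈ omega9 L B) :
    u z * (pdx9 L B u z + u z ^ 2 * pdx9 L B u z + pdxxx9 L B u z + pdxyy9 L B u z)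
      = ∂ₓ (fluxX L B u) z + ∂ᵧ (fluxY L B u) z := by
  have hS := uniqueDiffOn_closRect9 hL hB
  have hz_int : z ∈ interior (closRect9 L B) := (interior_closRect9 L B).symm ▸ hz
  have hzS : z ∈ closRect9 L B := interior_subset hz_int
  have hxyy : ∂ᵧ (∂ₓ (∂ᵧ u)) z = ∂ₓ (∂ᵧ (∂ᵧ u)) z :=
    dirDerivWithin_comm hS (hu.dirDerivWithin hS (by norm_num) _) (subset_closure hz_int) hzS _ _
  rw [dirDerivWithin_fluxX hL hB hu hzS, dirDerivWithin_fluxY hL hB hu hzS, hxyy, pdxxx9, pdxyy9,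
    iteratedFDerivWithin_three_apply hS hu hzS, iteratedFDerivWithin_three_apply hS hu hzS,
    pdx9_eq_dirDerivWithin]
  ring

theorem integral_fluxY_eq_zero (hL : 0 ≤ L) {b : ℝ} (hzero : ∀ x ∈ Icc 0 L, u (x, b) = 0) :
    ∫ x in (0 : ℝ)..L, fluxY L B u (x, b) = 0 := by
  rw [intervalIntegral.integral_congr (g := 0) fun x hx => by
    simp [fluxY, hzero x (uIcc_of_le hL ▸ hx)]]
  simp

theorem integral_fluxX_of_vanishing (hB : 0 < B) (hu : DifferentiableOn ℝ u (closRect9 L B))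
    {a : ℝ} (ha : a ∈ Icc 0 L) (hzero : ∀ y ∈ Icc (-B) B, u (a, y) = 0) :
    ∫ y in (-B)..B, fluxX L B u (a, y) = -((∫ y in (-B)..B, pdx9 L B u (a, y) ^ 2) / 2) := by
  have hside : EqOn (fun y => fluxX L B u (a, y)) (fun y => -(pdx9 L B u (a, y) ^ 2 / 2))
      (uIcc (-B) B) := fun y hy => by
    rw [uIcc_of_le (neg_le_self hB.le)] at hy
    have huy : ∂ᵧ u (a, y) = 0 :=
      dirDerivWithin_snd_eq_zero_of_vanishing (neg_lt_self hB) (fun t ht => ⟨ha, ht⟩)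
        (hu _ ⟨ha, hy⟩) hzero hy
    simp [fluxX, hzero y hy, huy, pdx9_eq_dirDerivWithin]
  rw [intervalIntegral.integral_congr hside]
  simp [intervalIntegral.integral_div]

end Flux

/-- **The identity behind Estimate I (5.3)**: multiplying the spatial part of the mZK
equation by `u` and integrating over `Ω = (0,L) × (-B,B)` gives, for `u` three times
continuously differentiable on the closure of `Ω` with `u(x,±B) = 0`,
`u(0,y) = u(L,y) = 0` and `u_x(L,y) = 0`,
`2∫_Ω u (u_x + u²u_x + u_xxx + u_xyy) = ∫_{-B}^{B} u_x(0,y)² dy ≥ 0`. -/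
theorem estimate_I_identity (L B : ℝ) (hL : 0 < L) (hB : 0 < B) (u : ℝ × ℝ → ℝ)
    (hu : ContDiffOn ℝ 3 u (closRect9 L B))
    (hbdy_y : ∀ x ∈ Set.Icc (0 : ℝ) L, u (x, -B) = 0 ∧ u (x, B) = 0)
    (hbdy_x : ∀ y ∈ Set.Icc (-B) B, u ((0 : ℝ), y) = 0 ∧ u (L, y) = 0)
    (hbdy_ux : ∀ y ∈ Set.Icc (-B) B, pdx9 L B u (L, y) = 0) :
    (2 * (∫ z in omega9 L B,
          u z * (pdx9 L B u z + (u z) ^ 2 * pdx9 L B u z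
            + pdxxx9 L B u z + pdxyy9 L B u z))
        = ∫ y in (-B)..B, (pdx9 L B u (0, y)) ^ 2)
      ∧ 0 ≤ 2 * (∫ z in omega9 L B,
          u z * (pdx9 L B u z + (u z) ^ 2 * pdx9 L B u z
            + pdxxx9 L B u z + pdxyy9 L B u z)) := by
  have hdu : DifferentiableOn ℝ u (closRect9 L B) := hu.differentiableOn (by norm_num)
  have hux_right : ∫ y in (-B)..B, pdx9 L B u (L, y) ^ 2 = 0 := by
    rw [intervalIntegral.integral_congr (g := 0) fun y hy => by
      simp [hbdy_ux y (uIcc_of_le (neg_le_self hB.le) ▸ hy)]]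
    simp
  have hmain : 2 * (∫ z in omega9 L B,
      u z * (pdx9 L B u z + (u z) ^ 2 * pdx9 L B u z + pdxxx9 L B u z + pdxyy9 L B u z))
        = ∫ y in (-B)..B, (pdx9 L B u (0, y)) ^ 2 := by
    rw [setIntegral_congr_fun (s := omega9 L B) (measurableSet_Ioo.prod measurableSet_Ioo)
        fun z hz => integrand_eq_dirDerivWithin_flux hL hB hu hz,
      integral_omega9_eq_boundary hL hB (contDiffOn_fluxX hL hB hu) (contDiffOn_fluxY hL hB hu),
      integral_fluxY_eq_zero hL.le fun x hx => (hbdy_y x hx).1,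
      integral_fluxY_eq_zero hL.le fun x hx => (hbdy_y x hx).2,
      integral_fluxX_of_vanishing hB hdu (left_mem_Icc.2 hL.le) fun y hy => (hbdy_x y hy).1,
      integral_fluxX_of_vanishing hB hdu (right_mem_Icc.2 hL.le) fun y hy => (hbdy_x y hy).2,
      hux_right]
    ring
  exact ⟨hmain, hmain ▸ intervalIntegral.integral_nonneg (neg_le_self hB.le) fun y _ => sq_nonneg _⟩
end
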